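/- Assume 2r < σ². Then for every fixed x > 0 the map t ↦ Z(t,x) is nonincreasing on [0,T], and for every fixed t ∈ [0,T] the map x ↦ Z(t,x) is nondecreasing on (0,∞). -/

import Mathlib

open Real Set

noncomputable section

/-- The standard normal cumulative distribution function `Φ`. -/
def stdCDF (y : ℝ) : ℝ := ∫ z in Iic y, Real.exp (-z ^ 2 / 2) / Real.sqrt (2 * π)

/-- The finite-horizon Azéma supermartingale function `Z(t,x)` (with `α = 2r/σ² - 1`):
for `t < T`, `Z(t,x) = min{Φ(d₁) + (L/x)^α Φ(d₂), 1}`, and at `t = T` it is `1` for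
`x ≥ L` and `0` for `x < L`. -/
def Zt (r σ L T t x : ℝ) : ℝ :=
  if t < T then
    min (stdCDF ((-Real.log (L / x) + (r - σ ^ 2 / 2) * (T - t)) / (σ * Real.sqrt (T - t))) +
        (L / x) ^ (2 * r / σ ^ 2 - 1) *
          stdCDF ((-Real.log (L / x) - (r - σ ^ 2 / 2) * (T - t)) / (σ * Real.sqrt (T - t)))) 1
  else if L ≤ x then 1 else 0

/-! With `l = log (L/x)`, `u = √(T - t)` and `m = r - σ²/2`, the expression inside the
minimum is `Φ(d₁) + e^{2ml/σ²} Φ(d₂)` with `d₁,₂ = (-l ± m u²)/(σu)`. Since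
`e^{2ml/σ²} φ(d₂) = φ(d₁)`, its `u`-derivative collapses to `φ(d₁) · 2l/(σu²)`, which is
nonnegative for `x ≤ L`: so `Z` decreases as `t ↑ T`, down to `Z(T,x) = 0`. When `2r < σ²`,
i.e. `m < 0`, all three terms are antitone in `l`, so `Z` is nondecreasing in `x`; as the
expression equals `Φ(a) + Φ(-a) = 1` at `l = 0`, it is at least `1` for `x ≥ L`, where
therefore `Z ≡ 1`. -/

open MeasureTheory

def stdPDF (z : ℝ) : ℝ := exp (-z ^ 2 / 2) / √(2 * π)

lemma stdPDF_eq_gaussianPDFReal : stdPDF = ProbabilityTheory.gaussianPDFReal 0 1 := by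
  ext z
  simp [stdPDF, ProbabilityTheory.gaussianPDFReal, div_eq_inv_mul]

lemma integrable_stdPDF : Integrable stdPDF := by
  rw [stdPDF_eq_gaussianPDFReal]
  exact ProbabilityTheory.integrable_gaussianPDFReal 0 1

lemma stdPDF_pos (z : ℝ) : 0 < stdPDF z := by
  rw [stdPDF_eq_gaussianPDFReal]
  exact ProbabilityTheory.gaussianPDFReal_pos 0 1 z one_ne_zero

lemma continuous_stdPDF : Continuous stdPDF := by
  unfold stdPDF
  fun_prop

lemma stdCDF_eq_integral_stdPDF (y : ℝ) : stdCDF y = ∫ z in Iic y, stdPDF z := rfl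

lemma stdCDF_nonneg (y : ℝ) : 0 ≤ stdCDF y :=
  setIntegral_nonneg measurableSet_Iic fun z _ => (stdPDF_pos z).le

lemma monotone_stdCDF : Monotone stdCDF := fun _ _ hab =>
  setIntegral_mono_set integrable_stdPDF.integrableOn
    (.of_forall fun z => (stdPDF_pos z).le) (.of_forall (Iic_subset_Iic.2 hab))

lemma stdCDF_add_stdCDF_neg (y : ℝ) : stdCDF y + stdCDF (-y) = 1 := by
  have h_neg : stdCDF (-y) = ∫ z in Ioi y, stdPDF z := by
    rw [stdCDF_eq_integral_stdPDF, ← integral_comp_neg_Ioi]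
    simp [stdPDF]
  rw [h_neg, stdCDF_eq_integral_stdPDF, intervalIntegral.integral_Iic_add_Ioi
    integrable_stdPDF.integrableOn integrable_stdPDF.integrableOn, stdPDF_eq_gaussianPDFReal]
  exact ProbabilityTheory.integral_gaussianPDFReal_eq_one 0 one_ne_zero

lemma hasDerivAt_stdCDF (y : ℝ) : HasDerivAt stdCDF (stdPDF y) y := by
  have h_split : stdCDF = fun b => stdCDF 0 + ∫ z in (0 : ℝ)..b, stdPDF z := by
    ext b
    rw [← intervalIntegral.integral_Iic_sub_Iic integrable_stdPDF.integrableOn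
      integrable_stdPDF.integrableOn, stdCDF_eq_integral_stdPDF, stdCDF_eq_integral_stdPDF]
    ring
  rw [h_split]
  exact (intervalIntegral.integral_hasDerivAt_right integrable_stdPDF.intervalIntegrable
    (continuous_stdPDF.stronglyMeasurableAtFilter _ _) continuous_stdPDF.continuousAt).const_add _

def Zunclipped (σ m l u : ℝ) : ℝ :=
  stdCDF ((-l + m * u ^ 2) / (σ * u)) +
    exp (2 * m / σ ^ 2 * l) * stdCDF ((-l - m * u ^ 2) / (σ * u))

lemma Zunclipped_nonneg (σ m l u : ℝ) : 0 ≤ Zunclipped σ m l u :=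
  add_nonneg (stdCDF_nonneg _) (mul_nonneg (exp_pos _).le (stdCDF_nonneg _))

lemma Zunclipped_zero (σ m u : ℝ) : Zunclipped σ m 0 u = 1 := by
  simpa [Zunclipped, neg_div] using stdCDF_add_stdCDF_neg (m * u ^ 2 / (σ * u))

lemma antitone_Zunclipped_left {σ m u : ℝ} (hσ : 0 < σ) (hm : m ≤ 0) (hu : 0 < u) :
    Antitone fun l => Zunclipped σ m l u := by
  intro l l' hll'
  have hσu : 0 < σ * u := mul_pos hσ hu
  have h₁ : stdCDF ((-l' + m * u ^ 2) / (σ * u)) ≤ stdCDF ((-l + m * u ^ 2) / (σ * u)) :=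
    monotone_stdCDF ((div_le_div_iff_of_pos_right hσu).2 (by linarith))
  have h₂ : stdCDF ((-l' - m * u ^ 2) / (σ * u)) ≤ stdCDF ((-l - m * u ^ 2) / (σ * u)) :=
    monotone_stdCDF ((div_le_div_iff_of_pos_right hσu).2 (by linarith))
  have hα : 2 * m / σ ^ 2 ≤ 0 := div_nonpos_of_nonpos_of_nonneg (by linarith) (by positivity)
  have hexp : exp (2 * m / σ ^ 2 * l') ≤ exp (2 * m / σ ^ 2 * l) :=
    exp_le_exp.2 (mul_le_mul_of_nonpos_left hll' hα)
  exact add_le_add h₁ (mul_le_mul hexp h₂ (stdCDF_nonneg _) (exp_pos _).le)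

lemma one_le_Zunclipped {σ m l u : ℝ} (hσ : 0 < σ) (hm : m ≤ 0) (hl : l ≤ 0) (hu : 0 < u) :
    1 ≤ Zunclipped σ m l u :=
  Zunclipped_zero σ m u ▸ antitone_Zunclipped_left hσ hm hu hl

lemma exp_mul_stdPDF_eq {σ m l u : ℝ} (hσ : σ ≠ 0) (hu : u ≠ 0) :
    exp (2 * m / σ ^ 2 * l) * stdPDF ((-l - m * u ^ 2) / (σ * u)) =
      stdPDF ((-l + m * u ^ 2) / (σ * u)) := by
  unfold stdPDF
  rw [← mul_div_assoc, ← exp_add]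
  congr 2
  field_simp
  ring

lemma hasDerivAt_neg_add_mul_sq_div_mul (σ a l : ℝ) {u : ℝ} (hσ : σ ≠ 0) (hu : u ≠ 0) :
    HasDerivAt (fun u => (-l + a * u ^ 2) / (σ * u)) ((l + a * u ^ 2) / (σ * u ^ 2)) u := by
  refine ((((hasDerivAt_pow 2 u).const_mul a).const_add (-l)).fun_div
    ((hasDerivAt_id' u).const_mul σ) (mul_ne_zero hσ hu)).congr_deriv ?_
  field_simp
  ring

lemma hasDerivAt_Zunclipped_right (σ m l : ℝ) {u : ℝ} (hσ : σ ≠ 0) (hu : u ≠ 0) :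
    HasDerivAt (Zunclipped σ m l)
      (stdPDF ((-l + m * u ^ 2) / (σ * u)) * (2 * l / (σ * u ^ 2))) u := by
  have h₁ := (hasDerivAt_stdCDF _).comp u (hasDerivAt_neg_add_mul_sq_div_mul σ m l hσ hu)
  have h₂ := ((hasDerivAt_stdCDF _).comp u (hasDerivAt_neg_add_mul_sq_div_mul σ (-m) l hσ hu)).const_mul
    (exp (2 * m / σ ^ 2 * l))
  simp only [neg_mul, ← sub_eq_add_neg] at h₂
  refine (h₁.add h₂).congr_deriv ?_
  rw [← mul_assoc, exp_mul_stdPDF_eq hσ hu]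
  field_simp
  ring

lemma monotoneOn_Zunclipped_right {σ m l : ℝ} (hσ : 0 < σ) (hl : 0 ≤ l) :
    MonotoneOn (Zunclipped σ m l) (Ioi 0) := by
  have hderiv (u : ℝ) (hu : u ∈ Ioi 0) :=
    hasDerivAt_Zunclipped_right σ m l hσ.ne' (ne_of_gt hu)
  refine monotoneOn_of_hasDerivWithinAt_nonneg
    (f' := fun u => stdPDF ((-l + m * u ^ 2) / (σ * u)) * (2 * l / (σ * u ^ 2))) (convex_Ioi 0)
    (fun u hu => (hderiv u hu).continuousAt.continuousWithinAt) ?_ ?_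
  · simpa only [interior_Ioi] using fun u hu => (hderiv u hu).hasDerivWithinAt
  · rw [interior_Ioi]
    exact fun u (hu : 0 < u) => mul_nonneg (stdPDF_pos _).le (by positivity)

lemma Zt_of_lt {r σ L T t x : ℝ} (hσ : σ ≠ 0) (hL : 0 < L) (hx : 0 < x) (ht : t < T) :
    Zt r σ L T t x = min (Zunclipped σ (r - σ ^ 2 / 2) (log (L / x)) √(T - t)) 1 := by
  have hα : 2 * r / σ ^ 2 - 1 = 2 * (r - σ ^ 2 / 2) / σ ^ 2 := by field_simp
  rw [Zt, if_pos ht, rpow_def_of_pos (div_pos hL hx), hα, mul_comm (log _)]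
  set u := √(T - t)
  rw [show T - t = u ^ 2 from (sq_sqrt (sub_nonneg.2 ht.le)).symm, Zunclipped]

lemma Zt_of_not_lt (r σ L : ℝ) {T t : ℝ} (x : ℝ) (ht : ¬t < T) :
    Zt r σ L T t x = if L ≤ x then 1 else 0 :=
  if_neg ht

lemma Zt_nonneg {r σ L T t x : ℝ} (hσ : σ ≠ 0) (hL : 0 < L) (hx : 0 < x) :
    0 ≤ Zt r σ L T t x := by
  by_cases ht : t < T
  · rw [Zt_of_lt hσ hL hx ht]
    exact le_min (Zunclipped_nonneg ..) zero_le_one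
  · rw [Zt_of_not_lt r σ L x ht]
    split_ifs <;> norm_num

lemma Zt_eq_one {r σ L T x : ℝ} (hσ : 0 < σ) (hvol : 2 * r ≤ σ ^ 2) (hL : 0 < L)
    (hLx : L ≤ x) (t : ℝ) : Zt r σ L T t x = 1 := by
  by_cases ht : t < T
  · have hx : 0 < x := hL.trans_le hLx
    rw [Zt_of_lt hσ.ne' hL hx ht, min_eq_right]
    exact one_le_Zunclipped hσ (by linarith) (log_nonpos (by positivity) ((div_le_one hx).2 hLx))
      (sqrt_pos.2 (sub_pos.2 ht))
  · rw [Zt_of_not_lt r σ L x ht, if_pos hLx]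

lemma antitone_Zt_time_of_lt {r σ L T x : ℝ} (hσ : 0 < σ) (hx : 0 < x) (hxL : x < L) :
    Antitone fun t => Zt r σ L T t x := by
  have hL : 0 < L := hx.trans hxL
  intro a b hab
  by_cases hb : b < T
  · have ha : a < T := hab.trans_lt hb
    simp only [Zt_of_lt hσ.ne' hL hx ha, Zt_of_lt hσ.ne' hL hx hb]
    refine min_le_min_right 1 (monotoneOn_Zunclipped_right hσ ?_ ?_ ?_ ?_)
    · exact log_nonneg ((one_le_div hx).2 hxL.le)
    · exact sqrt_pos.2 (sub_pos.2 hb)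
    · exact sqrt_pos.2 (sub_pos.2 ha)
    · exact sqrt_le_sqrt (by linarith)
  · simp only [Zt_of_not_lt r σ L x hb, if_neg (not_le.2 hxL)]
    exact Zt_nonneg hσ.ne' hL hx

lemma monotoneOn_Zt_space {r σ L T : ℝ} (hσ : 0 < σ) (hvol : 2 * r ≤ σ ^ 2) (hL : 0 < L)
    (t : ℝ) : MonotoneOn (fun x => Zt r σ L T t x) (Ioi 0) := by
  intro x₁ hx₁ x₂ hx₂ hx
  by_cases ht : t < T
  · simp only [Zt_of_lt hσ.ne' hL hx₁ ht, Zt_of_lt hσ.ne' hL hx₂ ht]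
    have hu : 0 < √(T - t) := sqrt_pos.2 (sub_pos.2 ht)
    refine min_le_min_right 1 (antitone_Zunclipped_left hσ (by linarith) hu ?_)
    exact log_le_log (div_pos hL hx₂) (div_le_div_of_nonneg_left hL.le hx₁ hx)
  · simp only [Zt_of_not_lt r σ L _ ht]
    split_ifs with h₁ h₂ <;> first | exact absurd (h₁.trans hx) h₂ | norm_num

theorem stmt_8_general (r σ L T : ℝ) (hσ : 0 < σ) (hL : 0 < L) (hvol : 2 * r < σ ^ 2) :
    (∀ x : ℝ, 0 < x → AntitoneOn (fun t => Zt r σ L T t x) (Icc 0 T)) ∧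
    (∀ t ∈ Icc (0 : ℝ) T, MonotoneOn (fun x => Zt r σ L T t x) (Ioi 0)) := by
  refine ⟨fun x hx => ?_, fun t _ => monotoneOn_Zt_space hσ hvol.le hL t⟩
  rcases lt_or_ge x L with hxL | hLx
  · exact (antitone_Zt_time_of_lt hσ hx hxL).antitoneOn _
  · simp only [Zt_eq_one hσ hvol.le hL hLx]
    exact antitoneOn_const

/-- Assume `2r < σ²`. Then for every fixed `x > 0` the map
`t ↦ Z(t,x)` is nonincreasing on `[0,T]`, and for every fixed `t ∈ [0,T]` the map
`x ↦ Z(t,x)` is nondecreasing on `(0,∞)`. -/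
theorem stmt_8 (r σ L K T : ℝ) (hr : 0 < r) (hσ : 0 < σ) (hL : 0 < L) (hLK : L < K)
    (hT : 0 < T) (hvol : 2 * r < σ ^ 2) :
    (∀ x : ℝ, 0 < x → AntitoneOn (fun t => Zt r σ L T t x) (Icc 0 T)) ∧
    (∀ t ∈ Icc (0 : ℝ) T, MonotoneOn (fun x => Zt r σ L T t x) (Ioi 0)) :=
  stmt_8_general r σ L T hσ hL hvol
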